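/- Let q > 0, b > 1 be real with b > √q, and H a positive integer. Then ∑_{b ≤ j < bH, j ∈ ℤ} min(2b, ‖j/q‖^{−1})/j ≪ ((b/q) + (q/b) + log(q+2)) · log(bH/q + 2), hence ≪ ((q² + b²)/(qb)) · log(bH/q + 2) · log(q + 2), with an absolute implied constant. -/

import Mathlib

open Finset

/-- Distance to the nearest integer. -/
noncomputable def nint (x : ℝ) : ℝ := |x - round x|

/-- `min(2b, ‖θ‖⁻¹)`, with the convention that the value is `2b` when `‖θ‖ = 0`. -/
noncomputable def mintwo (b θ : ℝ) : ℝ :=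
  if nint θ = 0 then 2 * b else min (2 * b) (nint θ)⁻¹

/-!
Sort the `j` by the nearest multiple `m q` of `q`. For `m = 0` one has `‖j/q‖ = j/q`, so the
terms are at most `q / j²`, and `j ≥ b` makes their sum `O(q/b)`. For `m ≥ 1` one has
`1/j ≤ 2/(q m)`, while inside the block of `m` at most two integers `j` satisfy
`⌊|j - m q|⌋ = i`, each contributing `min(2b, q/i)`; as `i ≤ q/2` the block sum is
`O(b + q log(q+2))`. Summing `2/(q m)` over `m ≲ bH/q` gives the factor `log(bH/q + 2)`.
-/

lemma card_le_one_of_abs_sub_lt_one {t : Finset ℕ}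
    (h : ∀ j ∈ t, ∀ k ∈ t, |(j : ℝ) - k| < 1) : #t ≤ 1 := by
  refine card_le_one.2 fun j hj k hk => ?_
  obtain ⟨h₁, h₂⟩ := abs_sub_lt_iff.1 (h j hj k hk)
  have : j < k + 1 := by exact_mod_cast (by linarith : (j : ℝ) < k + 1)
  have : k < j + 1 := by exact_mod_cast (by linarith : (k : ℝ) < j + 1)
  omega

lemma card_filter_natFloor_abs_sub_eq_le_two (s : Finset ℕ) (x : ℝ) (i : ℕ) :
    #(s.filter fun j : ℕ => ⌊|(j : ℝ) - x|⌋₊ = i) ≤ 2 := by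
  set t := s.filter fun j : ℕ => ⌊|(j : ℝ) - x|⌋₊ = i
  have hband : ∀ j ∈ t, i ≤ |(j : ℝ) - x| ∧ |(j : ℝ) - x| < i + 1 := fun j hj =>
    (Nat.floor_eq_iff (abs_nonneg _)).1 (mem_filter.1 hj).2
  have left : #(t.filter fun j : ℕ => (j : ℝ) ≤ x) ≤ 1 := by
    refine card_le_one_of_abs_sub_lt_one fun j hj k hk => ?_
    obtain ⟨hjt, hjx⟩ := mem_filter.1 hj
    obtain ⟨hkt, hkx⟩ := mem_filter.1 hk
    have hj' := hband j hjt
    have hk' := hband k hkt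
    rw [abs_of_nonpos (by linarith)] at hj' hk'
    rw [abs_lt]; constructor <;> linarith
  have right : #(t.filter fun j : ℕ => ¬ (j : ℝ) ≤ x) ≤ 1 := by
    refine card_le_one_of_abs_sub_lt_one fun j hj k hk => ?_
    obtain ⟨hjt, hjx⟩ := mem_filter.1 hj
    obtain ⟨hkt, hkx⟩ := mem_filter.1 hk
    have hj' := hband j hjt
    have hk' := hband k hkt
    rw [abs_of_pos (by linarith)] at hj' hk'
    rw [abs_lt]; constructor <;> linarith
  rw [← card_filter_add_card_filter_not (fun j : ℕ => (j : ℝ) ≤ x)]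
  omega

lemma sum_le_two_mul_sum_range_of_le_natFloor_abs_sub {s : Finset ℕ} {x : ℝ} {R : ℕ}
    {f w : ℕ → ℝ} (hw : ∀ i, 0 ≤ w i) (hR : ∀ j ∈ s, |(j : ℝ) - x| < R)
    (hf : ∀ j ∈ s, f j ≤ w ⌊|(j : ℝ) - x|⌋₊) :
    ∑ j ∈ s, f j ≤ 2 * ∑ i ∈ range R, w i := by
  calc ∑ j ∈ s, f j ≤ ∑ j ∈ s, w ⌊|(j : ℝ) - x|⌋₊ := sum_le_sum hf
    _ = ∑ i ∈ s.image (fun j : ℕ => ⌊|(j : ℝ) - x|⌋₊),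
          #(s.filter fun j : ℕ => ⌊|(j : ℝ) - x|⌋₊ = i) • w i := sum_comp _ _
    _ ≤ ∑ i ∈ s.image (fun j : ℕ => ⌊|(j : ℝ) - x|⌋₊), 2 * w i := by
      refine sum_le_sum fun i _ => ?_
      rw [nsmul_eq_mul]
      exact mul_le_mul_of_nonneg_right
        (by exact_mod_cast card_filter_natFloor_abs_sub_eq_le_two s x i) (hw i)
    _ ≤ ∑ i ∈ range R, 2 * w i := by
      refine sum_le_sum_of_subset_of_nonneg (fun i hi => ?_) fun i _ _ => by linarith [hw i]
      obtain ⟨j, hj, rfl⟩ := mem_image.1 hi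
      exact mem_range.2 ((Nat.floor_lt (abs_nonneg _)).2 (hR j hj))
    _ = 2 * ∑ i ∈ range R, w i := (mul_sum _ _ _).symm

lemma nint_eq_abs_sub_of_round_eq {x : ℝ} {m : ℤ} (h : round x = m) : nint x = |x - m| := by
  rw [nint, h]

lemma mintwo_le_two_mul (b θ : ℝ) : mintwo b θ ≤ 2 * b := by
  unfold mintwo
  split_ifs
  exacts [le_rfl, min_le_left _ _]

lemma mintwo_nonneg {b : ℝ} (hb : 0 ≤ b) (θ : ℝ) : 0 ≤ mintwo b θ := by
  unfold mintwo
  split_ifs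
  exacts [by linarith, le_min (by linarith) (inv_nonneg.2 (abs_nonneg _))]

lemma mintwo_le_inv_of_le_nint {b θ t : ℝ} (ht : 0 < t) (h : t ≤ nint θ) :
    mintwo b θ ≤ t⁻¹ := by
  rw [mintwo, if_neg (by linarith)]
  exact (min_le_right _ _).trans (inv_anti₀ ht h)

lemma harmonic_le_one_add_log_of_le {n : ℕ} {y : ℝ} (hy : 1 ≤ y) (hn : (n : ℝ) ≤ y) :
    (harmonic n : ℝ) ≤ 1 + Real.log y := by
  rcases n.eq_zero_or_pos with rfl | hpos
  · simp only [harmonic_zero, Rat.cast_zero]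
    linarith [Real.log_nonneg hy]
  · exact (harmonic_le_one_add_log n).trans (by gcongr)

lemma sum_mintwo_le_of_round_eq {q b : ℝ} (hq : 0 < q) (hb : 0 ≤ b) {m : ℤ} {s : Finset ℕ}
    (hs : ∀ j ∈ s, round ((j : ℝ) / q) = m) :
    ∑ j ∈ s, mintwo b ((j : ℝ) / q) ≤ 2 * (2 * b + q * (1 + Real.log (q + 2))) := by
  set w : ℕ → ℝ := fun i => if i = 0 then 2 * b else q / i
  have hdist : ∀ j ∈ s, nint ((j : ℝ) / q) = |(j : ℝ) - m * q| / q := fun j hj => by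
    rw [nint_eq_abs_sub_of_round_eq (hs j hj), ← abs_of_pos hq, ← abs_div, abs_of_pos hq,
      sub_div, mul_div_cancel_right₀ _ hq.ne']
  have hR : ∀ j ∈ s, |(j : ℝ) - m * q| < ⌊q / 2⌋₊ + 1 := fun j hj => by
    have h := abs_sub_round ((j : ℝ) / q)
    rw [← nint, hdist j hj, div_le_iff₀ hq] at h
    linarith [Nat.lt_floor_add_one (q / 2)]
  have hf : ∀ j ∈ s, mintwo b ((j : ℝ) / q) ≤ w ⌊|(j : ℝ) - m * q|⌋₊ := fun j hj => by
    by_cases hi : ⌊|(j : ℝ) - m * q|⌋₊ = 0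
    · simp only [w, if_pos hi, mintwo_le_two_mul]
    · simp only [w, if_neg hi]
      rw [← inv_div _ q]
      refine mintwo_le_inv_of_le_nint (by positivity) ?_
      rw [hdist j hj]
      gcongr
      exact Nat.floor_le (abs_nonneg _)
  have hsum : ∑ i ∈ range (⌊q / 2⌋₊ + 1), w i = 2 * b + q * harmonic ⌊q / 2⌋₊ := by
    rw [sum_range_succ', add_comm]
    simp [w, harmonic, mul_sum, div_eq_mul_inv]
  have hharm : (harmonic ⌊q / 2⌋₊ : ℝ) ≤ 1 + Real.log (q + 2) :=
    harmonic_le_one_add_log_of_le (by linarith)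
      (by linarith [Nat.floor_le (by positivity : 0 ≤ q / 2)])
  calc ∑ j ∈ s, mintwo b ((j : ℝ) / q)
      ≤ 2 * ∑ i ∈ range (⌊q / 2⌋₊ + 1), w i :=
        sum_le_two_mul_sum_range_of_le_natFloor_abs_sub
          (fun i => by positivity) (by exact_mod_cast hR) hf
    _ ≤ 2 * (2 * b + q * (1 + Real.log (q + 2))) := by rw [hsum]; gcongr

lemma sum_mintwo_div_le_of_round_eq_zero {q b : ℝ} (hq : 0 < q) {n N : ℕ} (hn : 0 < n)
    {s : Finset ℕ} (hsub : s ⊆ Ico n N) (hs : ∀ j ∈ s, round ((j : ℝ) / q) = 0) :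
    ∑ j ∈ s, mintwo b ((j : ℝ) / q) / j ≤ 2 * q / n := by
  have hterm : ∀ j ∈ s, mintwo b ((j : ℝ) / q) / j ≤ q * ((j : ℝ) ^ 2)⁻¹ := fun j hj => by
    have hj0 : (0 : ℝ) < j := by exact_mod_cast hn.trans_le (mem_Ico.1 (hsub hj)).1
    have hnint : (j : ℝ) / q ≤ nint ((j : ℝ) / q) := by
      rw [nint_eq_abs_sub_of_round_eq (hs j hj), Int.cast_zero, sub_zero]
      exact le_abs_self _
    calc mintwo b ((j : ℝ) / q) / j ≤ ((j : ℝ) / q)⁻¹ / j := by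
          gcongr; exact mintwo_le_inv_of_le_nint (by positivity) hnint
      _ = q * ((j : ℝ) ^ 2)⁻¹ := by field_simp
  obtain ⟨k, rfl⟩ : ∃ k, n = k + 1 := ⟨n - 1, by omega⟩
  calc ∑ j ∈ s, mintwo b ((j : ℝ) / q) / j ≤ ∑ j ∈ s, q * ((j : ℝ) ^ 2)⁻¹ := sum_le_sum hterm
    _ ≤ ∑ j ∈ Ioo k N, q * ((j : ℝ) ^ 2)⁻¹ := by
      refine sum_le_sum_of_subset_of_nonneg (fun j hj => ?_) fun _ _ _ => by positivity
      have := mem_Ico.1 (hsub hj)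
      exact mem_Ioo.2 ⟨by omega, this.2⟩
    _ ≤ q * (2 / (k + 1)) := by rw [← mul_sum]; gcongr; exact sum_Ioo_inv_sq_le k N
    _ = 2 * q / ↑(k + 1) := by push_cast; ring

lemma sum_mintwo_div_le_of_round_eq {q b : ℝ} (hq : 0 < q) (hb : 0 ≤ b) {m : ℕ} (hm : 0 < m)
    {s : Finset ℕ} (hs : ∀ j ∈ s, round ((j : ℝ) / q) = m) :
    ∑ j ∈ s, mintwo b ((j : ℝ) / q) / j ≤
      2 * (2 * b + q * (1 + Real.log (q + 2))) * (2 / (q * m)) := by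
  have hinv : ∀ j ∈ s, (j : ℝ)⁻¹ ≤ 2 / (q * m) := fun j hj => by
    have h := abs_le.1 (abs_sub_round ((j : ℝ) / q))
    rw [hs j hj, Int.cast_natCast] at h
    have hm1 : (1 : ℝ) ≤ m := by exact_mod_cast hm
    have hjm : q * m / 2 ≤ j := by
      have := (le_div_iff₀ hq).1 (by linarith : (m : ℝ) / 2 ≤ j / q)
      linarith
    calc (j : ℝ)⁻¹ ≤ (q * m / 2)⁻¹ := inv_anti₀ (by positivity) hjm
      _ = 2 / (q * m) := inv_div _ _
  calc ∑ j ∈ s, mintwo b ((j : ℝ) / q) / j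
      ≤ ∑ j ∈ s, mintwo b ((j : ℝ) / q) * (2 / (q * m)) := sum_le_sum fun j hj => by
        rw [div_eq_mul_inv]; exact mul_le_mul_of_nonneg_left (hinv j hj) (mintwo_nonneg hb _)
    _ = (∑ j ∈ s, mintwo b ((j : ℝ) / q)) * (2 / (q * m)) := (sum_mul _ _ _).symm
    _ ≤ 2 * (2 * b + q * (1 + Real.log (q + 2))) * (2 / (q * m)) := by
      gcongr
      exact sum_mintwo_le_of_round_eq hq hb (m := m) (by exact_mod_cast hs)

lemma sum_mintwo_div_le {q b X : ℝ} (hq : 0 < q) (hb : 1 < b) (hX : 0 ≤ X) :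
    ∑ j ∈ Ico ⌈b⌉₊ ⌈X⌉₊, mintwo b ((j : ℝ) / q) / j ≤
      2 * (q / b) + 4 * (2 * (b / q) + 1 + Real.log (q + 2)) * (1 + Real.log (X / q + 2)) := by
  set G := Real.log (q + 2)
  set M := ⌊X / q + 1 / 2⌋₊
  have hround : ∀ j : ℕ, (((round ((j : ℝ) / q)).toNat : ℕ) : ℤ) = round ((j : ℝ) / q) :=
    fun j => Int.toNat_of_nonneg (by rw [round_eq]; exact Int.floor_nonneg.2 (by positivity))
  have hfiber : ∀ m : ℕ, ∀ j ∈ (Ico ⌈b⌉₊ ⌈X⌉₊).filter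
      (fun j : ℕ => (round ((j : ℝ) / q)).toNat = m), round ((j : ℝ) / q) = m :=
    fun m j hj => by rw [← hround, (mem_filter.1 hj).2]
  have hmaps : ∀ j ∈ Ico ⌈b⌉₊ ⌈X⌉₊, (round ((j : ℝ) / q)).toNat ∈ range (M + 1) := by
    intro j hj
    have hjX : (j : ℝ) < X := Nat.lt_ceil.1 (mem_Ico.1 hj).2
    have h := (abs_le.1 (abs_sub_round ((j : ℝ) / q))).1
    rw [← hround, Int.cast_natCast] at h
    refine mem_range.2 (Nat.lt_succ_of_le (Nat.le_floor ?_))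
    linarith [div_lt_div_of_pos_right hjX hq]
  have hn : 0 < ⌈b⌉₊ := Nat.ceil_pos.2 (by linarith)
  have hzero := sum_mintwo_div_le_of_round_eq_zero (b := b) hq hn (filter_subset _ _)
    fun j hj => by exact_mod_cast hfiber 0 j hj
  have hfibers := fun m : ℕ =>
    sum_mintwo_div_le_of_round_eq (b := b) hq (by linarith) m.succ_pos (hfiber (m + 1))
  have hharm : (harmonic M : ℝ) ≤ 1 + Real.log (X / q + 2) :=
    harmonic_le_one_add_log_of_le (by linarith [div_nonneg hX hq.le])
      (by linarith [Nat.floor_le (by positivity : 0 ≤ X / q + 1 / 2)])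
  rw [← sum_fiberwise_of_maps_to hmaps, sum_range_succ']
  calc _ ≤ ∑ m ∈ range M, 2 * (2 * b + q * (1 + G)) * (2 / (q * ↑(m + 1))) + 2 * q / ⌈b⌉₊ :=
        add_le_add (sum_le_sum fun m _ => hfibers m) hzero
    _ = 4 * (2 * (b / q) + 1 + G) * harmonic M + 2 * q / ⌈b⌉₊ := by
      simp only [harmonic, Rat.cast_sum, mul_sum]
      push_cast
      congr 1
      refine sum_congr rfl fun m _ => ?_
      field_simp
      ring
    _ ≤ 4 * (2 * (b / q) + 1 + G) * (1 + Real.log (X / q + 2)) + 2 * (q / b) := by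
      gcongr
      · linarith [Real.log_nonneg (by linarith : (1 : ℝ) ≤ q + 2), div_pos (by linarith : 0 < b) hq]
      · rw [mul_div_assoc]; gcongr; exact Nat.le_ceil b
    _ = _ := add_comm _ _

lemma half_le_log_add_two {y : ℝ} (hy : 0 ≤ y) : 1 / 2 ≤ Real.log (y + 2) :=
  calc (1 / 2 : ℝ) ≤ Real.log 2 := by linarith [Real.log_two_gt_d9]
    _ ≤ Real.log (y + 2) := by gcongr; linarith

lemma two_le_div_add_div {x y : ℝ} (hx : 0 < x) (hy : 0 < y) : 2 ≤ x / y + y / x := by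
  rw [div_add_div _ _ hy.ne' hx.ne', le_div_iff₀ (by positivity)]
  nlinarith [sq_nonneg (x - y)]

theorem I2_estimate :
    ∃ C > 0, ∀ (q b : ℝ) (H : ℕ), 0 < q → 1 < b → Real.sqrt q < b → 0 < H →
      (∑ j ∈ Finset.Ico ⌈b⌉₊ ⌈b * H⌉₊, mintwo b ((j : ℝ) / q) / j
          ≤ C * (b / q + q / b + Real.log (q + 2)) * Real.log (b * H / q + 2)) ∧
      (∑ j ∈ Finset.Ico ⌈b⌉₊ ⌈b * H⌉₊, mintwo b ((j : ℝ) / q) / j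
          ≤ C * ((q ^ 2 + b ^ 2) / (q * b)) * Real.log (b * H / q + 2) *
              Real.log (q + 2)) := by
  refine ⟨90, by norm_num, fun q b H hq hb _ _ => ?_⟩
  have hb0 : 0 < b := by linarith
  have hS := sum_mintwo_div_le (X := b * H) hq hb (by positivity)
  have hquot : (q ^ 2 + b ^ 2) / (q * b) = b / q + q / b := by field_simp; ring
  set S := ∑ j ∈ Ico ⌈b⌉₊ ⌈b * H⌉₊, mintwo b ((j : ℝ) / q) / j
  set u := b / q
  set v := q / b
  set G := Real.log (q + 2)
  set L := Real.log (b * H / q + 2)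
  have hG : 1 / 2 ≤ G := half_le_log_add_two hq.le
  have hL : 1 / 2 ≤ L := half_le_log_add_two (by positivity)
  have hu : 0 < u := by positivity
  have hv : 0 < v := by positivity
  have huv : 2 ≤ u + v := two_le_div_add_div hb0 hq
  have hfirst : S ≤ 36 * (u + v + G) * L := by
    nlinarith [mul_nonneg hu.le (sub_nonneg.2 hL), mul_nonneg hv.le (sub_nonneg.2 hL),
      mul_nonneg (sub_nonneg.2 hG) (sub_nonneg.2 hL)]
  have hsum : u + v + G ≤ 5 / 2 * ((u + v) * G) := by nlinarith
  constructor
  · nlinarith [mul_nonneg (by linarith : 0 ≤ u + v + G) (by linarith : 0 ≤ L)]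
  · rw [hquot]
    nlinarith [mul_le_mul_of_nonneg_right hsum (by linarith : 0 ≤ L)]
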